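/- With σ defined via the negative-regular continued fraction of n/k as σ(k/n) = (1 + Σⱼ(bⱼ - 1))/n, one has σ(k/n) ≤ 1 for all n ≥ 2 and all k with 1 ≤ k ≤ n-1, gcd(k,n) = 1. -/
import Mathlib


/-- The list of entries `b₁, b₂, …` of the negative-regular (Hirzebruch–Jung)
continued fraction expansion of `n/k`, computed by the recursion
`n₀ = n`, `n₁ = k`, `bⱼ = ⌈nⱼ₋₁/nⱼ⌉`, `nⱼ₊₁ = bⱼ nⱼ - nⱼ₋₁`,
with fuel bounding the number of steps (the remainders strictly decrease,
so fuel `n` always suffices). -/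
def hjList : ℕ → ℕ → ℕ → List ℤ
  | 0, _, _ => []
  | _ + 1, _, 0 => []
  | f + 1, n, k + 1 =>
      ⌈(n : ℚ) / (k + 1)⌉ ::
        hjList f (k + 1) ((⌈(n : ℚ) / (k + 1)⌉ * ((k : ℤ) + 1) - (n : ℤ)).toNat)

/-- `σ(k/n) = (1 + Σⱼ (bⱼ - 1)) / n`, where the `bⱼ` are the entries of the
Hirzebruch–Jung continued fraction of `n/k`. -/
def hjSigma (n k : ℕ) : ℚ :=
  (1 + ((((hjList n n k).map (fun b => b - 1)).sum : ℤ) : ℚ)) / n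

lemma hjList_k_zero (f n : ℕ) : hjList f n 0 = [] := by
  cases f <;> rfl

lemma hj_sum_le (f : ℕ) : ∀ n k : ℕ, 1 ≤ k → k ≤ n →
    ((hjList f n k).map (fun b => b - 1)).sum ≤ (n : ℤ) - 1 := by
  induction f with
  | zero =>
    intro n k h1 h2
    simp only [hjList, List.map_nil, List.sum_nil]
    omega
  | succ f ih =>
    intro n k h1 h2
    obtain ⟨m, rfl⟩ : ∃ m, k = m + 1 := ⟨k - 1, by omega⟩
    rw [hjList]
    set b : ℤ := ⌈(n : ℚ) / (m + 1)⌉ with hb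
    have hq : (0 : ℚ) < (m : ℚ) + 1 := by positivity
    have e : (n : ℚ) / ((m : ℚ) + 1) * ((m : ℚ) + 1) = n := div_mul_cancel₀ _ hq.ne'
    have h1q : (n : ℚ) ≤ (b : ℚ) * ((m : ℚ) + 1) := by
      have := Int.le_ceil ((n : ℚ) / ((m : ℚ) + 1))
      nlinarith
    have h2q : (b : ℚ) * ((m : ℚ) + 1) < (n : ℚ) + ((m : ℚ) + 1) := by
      have := Int.ceil_lt_add_one ((n : ℚ) / ((m : ℚ) + 1))
      nlinarith
    have h1z : (n : ℤ) ≤ b * ((m : ℤ) + 1) := by exact_mod_cast h1q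
    have h2z : b * ((m : ℤ) + 1) < (n : ℤ) + ((m : ℤ) + 1) := by exact_mod_cast h2q
    have h3 : b ≤ (n : ℤ) - m := by
      rw [hb]
      have : ((n : ℤ) - m : ℤ) = ((n - m : ℤ)) := rfl
      rw [show ((n : ℤ) - m) = ((n : ℤ) - (m : ℤ)) from rfl]
      refine Int.ceil_le.2 ?_
      rw [div_le_iff₀ hq]
      push_cast
      have hmn : (m : ℚ) + 1 ≤ (n : ℚ) := by exact_mod_cast h2
      nlinarith
    set k' : ℕ := (b * ((m : ℤ) + 1) - (n : ℤ)).toNat with hk'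
    have hk'eq : (k' : ℤ) = b * ((m : ℤ) + 1) - n := Int.toNat_of_nonneg (by omega)
    have hk'le : k' ≤ m := by omega
    rcases Nat.eq_zero_or_pos k' with h0 | hpos
    · rw [h0, hjList_k_zero]
      simp only [List.map_cons, List.map_nil, List.sum_cons, List.sum_nil]
      omega
    · have := ih (m + 1) k' hpos (by omega)
      simp only [List.map_cons, List.sum_cons]
      push_cast at this
      omega

/-- `σ(k/n) ≤ 1` for all `n ≥ 2` and all `k` with `1 ≤ k ≤ n-1`, `gcd(k,n) = 1`. -/
theorem stmt_9 (n k : ℕ) (hn : 2 ≤ n) (hk1 : 1 ≤ k) (hk2 : k ≤ n - 1)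
    (hgcd : Nat.gcd k n = 1) : hjSigma n k ≤ 1 := by
  have hS : ((hjList n n k).map (fun b => b - 1)).sum ≤ (n : ℤ) - 1 :=
    hj_sum_le n n k hk1 (by omega)
  unfold hjSigma
  rw [div_le_one (by positivity : (0:ℚ) < (n:ℚ))]
  have : (1 : ℤ) + ((hjList n n k).map (fun b => b - 1)).sum ≤ (n : ℤ) := by omega
  exact_mod_cast this
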